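/- Let R be a sieve over an étale ℚ-algebra K and A ⊆ O_K any R-admissible set (i.e. −A + R_i ≠ O_K for every i). For any Følner sequence (I_N) in O_K: d̄_I({x ∈ O_K : x + A ⊆ F_R}) ≤ ∏_{i≥1} (1 − |−A + R_i|/N(𝔟_i)). Moreover, the density d_I({x : x + A ⊆ F_R}) exists and equals this product with the product strictly positive if and only if the sieve R', supported on the same ideals (𝔟_i) and defined by R'_i := −A + R_i, is Erdős and has weak light tails for (I_N). -/

import Mathlib

/-!
Each shifted set `-A + R_i` is a union of residue classes modulo `𝔟_i`, and `x + A ⊆ F_R` means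
that `x` avoids all of them. By the Chinese remainder theorem, avoiding the first `L` of them is a
condition on `x` modulo `𝔟_0 ⋯ 𝔟_(L-1)`, and along a Følner sequence every residue class modulo an
ideal of finite index `n` has density `1 / n` (its translates are the other classes, and translation
barely moves `I_N`). Hence the set avoiding the first `L` shifted sets has density the partial
product `P_L`, which gives the upper bound. The pattern set differs from that set by exactly
`⋃_{i ≥ L} R'_i ∖ ⋃_{j < L} R'_j`, so its density exists and equals `P = lim P_L` iff these tails
have vanishing upper density. Finally, as `|R'_i| < N(𝔟_i)` by admissibility, `P > 0` iff
`∑ |R'_i| / N(𝔟_i) < ∞`.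
-/

open Filter Topology MeasureTheory Pointwise symmDiff

noncomputable section

namespace ErdosSieve

variable {O : Type} [CommRing O]

/-- A sieve over (the ring of integers of) an étale `ℚ`-algebra: a sequence of pairwise
coprime invertible (i.e. finite-quotient) ideals `b i` together with, for each `i`, a finite
set `gen i` of representatives, so that the sieved-out set is `R_i = gen i + b i`, which is
required to be a proper subset of the ring. -/
structure Sieve (O : Type) [CommRing O] : Type where
  b : ℕ → Ideal O
  gen : ℕ → Finset O
  coprime : ∀ i j, i ≠ j → b i ⊔ b j = ⊤
  finQuot : ∀ i, Finite (O ⧸ b i)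
  ne_univ : ∀ i, (↑(gen i) : Set O) + (↑(b i) : Set O) ≠ Set.univ

/-- The `i`-th sieved-out set `R_i = gen i + b i`. -/
def Sieve.RSet (S : Sieve O) (i : ℕ) : Set O := (↑(S.gen i) : Set O) + (↑(S.b i) : Set O)

/-- The set `F_R` of `R`-free numbers. -/
def Sieve.FR (S : Sieve O) : Set O := (⋃ i, S.RSet i)ᶜ

/-- The norm `N(b i)` of the `i`-th ideal. -/
def Sieve.normb (S : Sieve O) (i : ℕ) : ℕ := Nat.card (O ⧸ S.b i)

/-- The number `|R_i|` of residue classes modulo `b i` met by `R_i`. -/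
def Sieve.cardR (S : Sieve O) (i : ℕ) : ℕ :=
  Nat.card ((Ideal.Quotient.mk (S.b i)) '' (S.RSet i))

/-- A sieve is Erdős if `∑ |R_i| / N(b_i) < ∞`. -/
def Sieve.IsErdos (S : Sieve O) : Prop :=
  Summable fun i => (S.cardR i : ℝ) / (S.normb i : ℝ)

/-- A Følner sequence: finite nonempty subsets of `O` which are asymptotically
translation-invariant. -/
def IsFolner (I : ℕ → Set O) : Prop :=
  (∀ N, (I N).Finite) ∧ (∀ N, (I N).Nonempty) ∧
    ∀ x : O, Tendsto
      (fun N => (Nat.card ↥(((x + ·) '' I N) ∆ (I N)) : ℝ) / (Nat.card ↥(I N) : ℝ))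
      atTop (𝓝 0)

/-- Upper density along a (Følner) sequence. -/
def upperDensity (I : ℕ → Set O) (A : Set O) : ℝ :=
  limsup (fun N => (Nat.card ↥(A ∩ I N) : ℝ) / (Nat.card ↥(I N) : ℝ)) atTop

/-- `A` has density `d` along the sequence `I`. -/
def HasDensity (I : ℕ → Set O) (A : Set O) (d : ℝ) : Prop :=
  Tendsto (fun N => (Nat.card ↥(A ∩ I N) : ℝ) / (Nat.card ↥(I N) : ℝ)) atTop (𝓝 d)

/-- `⋃_{i ≥ L} R i`. -/
def unionGe (R : ℕ → Set O) (L : ℕ) : Set O := ⋃ i, ⋃ (_ : L ≤ i), R i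

/-- `⋃_{i < L} R i`. -/
def unionLt (R : ℕ → Set O) (L : ℕ) : Set O := ⋃ i, ⋃ (_ : i < L), R i

/-- The weak light tails property for a family of sieved-out sets:
`limsup`-density of `⋃_{i ≥ L} R_i ∖ ⋃_{j < L} R_j` tends to `0` as `L → ∞`. -/
def WeakLightTailsFam (I : ℕ → Set O) (R : ℕ → Set O) : Prop :=
  Tendsto (fun L => upperDensity I (unionGe R L \ unionLt R L)) atTop (𝓝 0)

/-- The strong light tails property for a family of sieved-out sets. -/
def StrongLightTailsFam (I : ℕ → Set O) (R : ℕ → Set O) : Prop :=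
  Tendsto (fun L => upperDensity I (unionGe R L)) atTop (𝓝 0)

/-- A sieve has weak light tails for `I` if it is Erdős and the tail differences have
vanishing upper density. -/
def Sieve.HasWeakLightTails (S : Sieve O) (I : ℕ → Set O) : Prop :=
  S.IsErdos ∧ WeakLightTailsFam I S.RSet

/-- A sieve has strong light tails for `I` if it is Erdős and the tails have vanishing
upper density. -/
def Sieve.HasStrongLightTails (S : Sieve O) (I : ℕ → Set O) : Prop :=
  S.IsErdos ∧ StrongLightTailsFam I S.RSet

/-- The infinite product `∏_i (1 - |R_i|/N(b_i))`, realized as the infimum of the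
(nonincreasing) sequence of partial products, i.e. as its limit. -/
def Sieve.prodDensity (S : Sieve O) : ℝ :=
  ⨅ L : ℕ, ∏ i ∈ Finset.range L, (1 - (S.cardR i : ℝ) / (S.normb i : ℝ))

/-- `A` is an `R`-admissible set: `-A + R_i ≠ O` for all `i`. -/
def Sieve.Admissible (S : Sieve O) (A : Set O) : Prop :=
  ∀ i, -A + S.RSet i ≠ Set.univ

/-- The number `|-A + R_i|` of residue classes modulo `b i` met by `-A + R_i`. -/
def Sieve.cardShift (S : Sieve O) (A : Set O) (i : ℕ) : ℕ :=
  Nat.card ((Ideal.Quotient.mk (S.b i)) '' (-A + S.RSet i))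

/-- The infinite product `∏_i (1 - |-A + R_i|/N(b_i))` (as the infimum of the
partial products). -/
def Sieve.prodDensityShift (S : Sieve O) (A : Set O) : ℝ :=
  ⨅ L : ℕ, ∏ i ∈ Finset.range L, (1 - (S.cardShift A i : ℝ) / (S.normb i : ℝ))

/-- A subset `Y` of `O` is syndetic if finitely many translates of it cover `O`. -/
def Syndetic (Y : Set O) : Prop := ∃ C : Finset O, Y + (↑C : Set O) = Set.univ

-- Indicator of a subset of `O`, i.e. a point of the shift space `{0,1}^O`.
open Classical in
def chiSet (A : Set O) : O → Bool := fun x => if x ∈ A then true else false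

/-- The shift action `S_a(A) = A - a` on `{0,1}^O`: `χ_{A - a}(x) = χ_A (x + a)`. -/
def shiftB (a : O) (f : O → Bool) : O → Bool := fun x => f (x + a)

/-- The odometer group `G_R = ∏ i, O ⧸ b i`. -/
abbrev Sieve.GR (S : Sieve O) : Type := ∀ i : ℕ, O ⧸ S.b i

-- The map `φ_R : G_R → {0,1}^O`: `a ∈ φ_R(g)` iff `a + g i` avoids (the image of) `R_i`
-- modulo `b i` for every `i`.
open Classical in
def Sieve.phiB (S : Sieve O) (g : S.GR) : O → Bool := fun a =>
  if (∀ i, (Ideal.Quotient.mk (S.b i) a + g i) ∉ (Ideal.Quotient.mk (S.b i)) '' (S.RSet i))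
  then true else false

/-- The Mirsky measure `ν_R` on `{0,1}^O`: the pushforward under `φ_R` of the Haar
probability measure of the compact group `G_R` (each factor being finite and discrete,
and the Haar measure being normalized so that the whole group has measure `1`). -/
def Sieve.mirsky (S : Sieve O) : Measure (O → Bool) := by
  letI : ∀ i, TopologicalSpace (O ⧸ S.b i) := fun _ => ⊥
  haveI : ∀ i, DiscreteTopology (O ⧸ S.b i) := fun _ => ⟨rfl⟩
  haveI : ∀ i, Finite (O ⧸ S.b i) := S.finQuot
  haveI : ∀ i, IsTopologicalAddGroup (O ⧸ S.b i) := fun i => { }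
  letI : MeasurableSpace S.GR := borel _
  haveI : BorelSpace S.GR := ⟨rfl⟩
  exact Measure.map S.phiB (Measure.addHaarMeasure (G := S.GR) ⊤)

/-- The ring of integers of the étale `ℚ`-algebra `K 0 × ⋯ × K (m-1)`. -/
abbrev OK {m : ℕ} (K : Fin m → Type) [∀ j, Field (K j)] [∀ j, NumberField (K j)] : Type :=
  ∀ j, NumberField.RingOfIntegers (K j)

variable {m : ℕ} (K : Fin m → Type) [∀ j, Field (K j)] [∀ j, NumberField (K j)]

/-- The "ball" `B_N` in `O_K`: elements all of whose archimedean embeddings have absolute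
value at most `N` (the max over embeddings of all the number-field components). -/
def ball (N : ℕ) : Set (OK K) :=
  {x | ∀ j, ∀ φ : K j →+* ℂ,
    ‖φ (algebraMap (NumberField.RingOfIntegers (K j)) (K j) (x j))‖ ≤ N}

section InfiniteProduct

variable {x : ℕ → ℝ}

lemma antitone_prod_range_one_sub (h0 : ∀ i, 0 ≤ x i) (h1 : ∀ i, x i ≤ 1) :
    Antitone fun L => ∏ i ∈ Finset.range L, (1 - x i) :=
  antitone_nat_of_succ_le fun L => by
    rw [Finset.prod_range_succ]
    exact mul_le_of_le_one_right (Finset.prod_nonneg fun i _ => sub_nonneg.2 (h1 i))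
      (by linarith [h0 L])

lemma bddBelow_range_prod_range_one_sub (h1 : ∀ i, x i ≤ 1) :
    BddBelow (Set.range fun L => ∏ i ∈ Finset.range L, (1 - x i)) :=
  ⟨0, by rintro _ ⟨L, rfl⟩; exact Finset.prod_nonneg fun i _ => sub_nonneg.2 (h1 i)⟩

lemma tendsto_prod_range_one_sub (h0 : ∀ i, 0 ≤ x i) (h1 : ∀ i, x i ≤ 1) :
    Tendsto (fun L => ∏ i ∈ Finset.range L, (1 - x i)) atTop
      (𝓝 (⨅ L, ∏ i ∈ Finset.range L, (1 - x i))) :=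
  tendsto_atTop_ciInf (antitone_prod_range_one_sub h0 h1) (bddBelow_range_prod_range_one_sub h1)

lemma summable_of_iInf_prod_range_one_sub_pos (h0 : ∀ i, 0 ≤ x i) (h1 : ∀ i, x i ≤ 1)
    (hpos : 0 < ⨅ L, ∏ i ∈ Finset.range L, (1 - x i)) : Summable x := by
  set p := ⨅ L, ∏ i ∈ Finset.range L, (1 - x i)
  refine summable_of_sum_range_le h0 (c := -Real.log p) fun L => ?_
  have hp : p ≤ Real.exp (-∑ i ∈ Finset.range L, x i) :=
    calc p ≤ ∏ i ∈ Finset.range L, (1 - x i) := ciInf_le (bddBelow_range_prod_range_one_sub h1) L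
      _ ≤ ∏ i ∈ Finset.range L, Real.exp (-x i) :=
        Finset.prod_le_prod (fun i _ => sub_nonneg.2 (h1 i)) fun i _ => by
          linarith [Real.add_one_le_exp (-x i)]
      _ = Real.exp (-∑ i ∈ Finset.range L, x i) := by
        rw [← Real.exp_sum, Finset.sum_neg_distrib]
  have := Real.log_le_log hpos hp
  rw [Real.log_exp] at this
  linarith

lemma iInf_prod_range_one_sub_pos_of_summable (h0 : ∀ i, 0 ≤ x i) (h1 : ∀ i, x i < 1)
    (hx : Summable x) : 0 < ⨅ L, ∏ i ∈ Finset.range L, (1 - x i) := by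
  have hnorm : Summable fun i => ‖-x i‖ := hx.congr fun i => by simp [abs_of_nonneg (h0 i)]
  have hprod : Tendsto (fun L => ∏ i ∈ Finset.range L, (1 - x i)) atTop
      (𝓝 (∏' i, (1 + -x i))) := by
    simpa only [← sub_eq_add_neg] using
      (multipliable_one_add_of_summable hnorm).hasProd.tendsto_prod_nat
  rw [tendsto_nhds_unique (tendsto_prod_range_one_sub h0 fun i => (h1 i).le) hprod]
  refine lt_of_le_of_ne ?_ (tprod_one_add_ne_zero_of_summable
    (fun i => by linarith [h1 i]) hnorm).symm
  exact ge_of_tendsto' hprod fun L => Finset.prod_nonneg fun i _ => by linarith [h1 i]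

lemma iInf_prod_range_one_sub_pos_iff (h0 : ∀ i, 0 ≤ x i) (h1 : ∀ i, x i < 1) :
    0 < ⨅ L, ∏ i ∈ Finset.range L, (1 - x i) ↔ Summable x :=
  ⟨summable_of_iInf_prod_range_one_sub_pos h0 fun i => (h1 i).le,
    iInf_prod_range_one_sub_pos_of_summable h0 h1⟩

end InfiniteProduct

section Density

variable {α : Type*}

/-- `upperDensity I X` and `HasDensity I X d` are, by definition, the `limsup` and the limit of
`relFreq I X`. -/
def relFreq (I : ℕ → Set α) (X : Set α) (N : ℕ) : ℝ :=
  (Nat.card ↥(X ∩ I N) : ℝ) / (Nat.card ↥(I N) : ℝ)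

lemma relFreq_nonneg (I : ℕ → Set α) (X : Set α) (N : ℕ) : 0 ≤ relFreq I X N := by
  unfold relFreq
  positivity

lemma isBoundedUnder_ge_relFreq (I : ℕ → Set α) (X : Set α) :
    IsBoundedUnder (· ≥ ·) atTop (relFreq I X) :=
  isBoundedUnder_of ⟨0, relFreq_nonneg I X⟩

namespace IsFolner

variable {I : ℕ → Set O}

lemma card_pos (hI : IsFolner I) (N : ℕ) : 0 < (Nat.card ↥(I N) : ℝ) := by
  have := (hI.1 N).to_subtype
  have := (hI.2.1 N).to_subtype
  exact_mod_cast Nat.card_pos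

lemma relFreq_mono (hI : IsFolner I) {X Y : Set O} (h : X ⊆ Y) (N : ℕ) :
    relFreq I X N ≤ relFreq I Y N :=
  div_le_div_of_nonneg_right (Nat.cast_le.2 <| Nat.card_mono ((hI.1 N).inter_of_right Y)
    (Set.inter_subset_inter_left _ h)) (hI.card_pos N).le

lemma relFreq_univ (hI : IsFolner I) (N : ℕ) : relFreq I Set.univ N = 1 := by
  rw [relFreq, Set.univ_inter, div_self (hI.card_pos N).ne']

lemma isBoundedUnder_le_relFreq (hI : IsFolner I) (X : Set O) :
    IsBoundedUnder (· ≤ ·) atTop (relFreq I X) :=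
  isBoundedUnder_of ⟨1, fun N => hI.relFreq_univ N ▸ hI.relFreq_mono (Set.subset_univ X) N⟩

lemma upperDensity_mono (hI : IsFolner I) {X Y : Set O} (h : X ⊆ Y) :
    upperDensity I X ≤ upperDensity I Y :=
  limsup_le_limsup (Eventually.of_forall (hI.relFreq_mono h))
    (isBoundedUnder_ge_relFreq I X).isCoboundedUnder_le (hI.isBoundedUnder_le_relFreq Y)

lemma relFreq_union (hI : IsFolner I) {X Y : Set O} (h : Disjoint X Y) (N : ℕ) :
    relFreq I (X ∪ Y) N = relFreq I X N + relFreq I Y N := by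
  simp only [relFreq, ← add_div, Set.union_inter_distrib_right, Nat.card_coe_set_eq]
  rw [Set.ncard_union_eq (h.mono Set.inter_subset_left Set.inter_subset_left)
    ((hI.1 N).inter_of_right _) ((hI.1 N).inter_of_right _), Nat.cast_add]

end IsFolner

end Density

section Fibers

lemma ncard_inter_le_ncard_inter_add_ncard_symmDiff {α : Type*} {B C : Set α} (S : Set α)
    (hB : B.Finite) (hC : C.Finite) : (B ∩ S).ncard ≤ (C ∩ S).ncard + (B ∆ C).ncard := by
  have hsub : B ∩ S ⊆ (C ∩ S) ∪ (B ∆ C) := fun y ⟨hyB, hyS⟩ => by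
    by_cases hyC : y ∈ C
    · exact Or.inl ⟨hyC, hyS⟩
    · exact Or.inr (Or.inl ⟨hyB, hyC⟩)
  exact (Set.ncard_le_ncard hsub ((hC.inter_of_left S).union
    ((hB.union hC).subset Set.symmDiff_subset_union))).trans (Set.ncard_union_le _ _)

variable {G F : Type*} [AddCommGroup G] [FunLike F O G] [AddMonoidHomClass F O G]

lemma image_add_inter_preimage_singleton (f : F) (J : Set O) (x : O) (c : G) :
    (x + ·) '' (J ∩ f ⁻¹' {c}) = (x + ·) '' J ∩ f ⁻¹' {f x + c} := by
  rw [Set.image_inter (add_right_injective x)]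
  congr 1
  ext y
  simp only [Set.mem_image, Set.mem_preimage, Set.mem_singleton_iff]
  constructor
  · rintro ⟨t, rfl, rfl⟩
    exact map_add f x t
  · intro hy
    exact ⟨y - x, by rw [map_sub, hy, add_sub_cancel_left], add_sub_cancel x y⟩

variable {I : ℕ → Set O}

lemma IsFolner.relFreq_preimage_eq_sum {β : Type*} (hI : IsFolner I) (f : O → β)
    (T : Finset β) (N : ℕ) :
    relFreq I (f ⁻¹' T) N = ∑ d ∈ T, relFreq I (f ⁻¹' {d}) N := by
  classical
  obtain ⟨J, hJ⟩ := (hI.1 N).exists_finset_coe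
  simp only [relFreq, ← Finset.sum_div, ← hJ, Nat.card_coe_set_eq]
  congr 1
  have hfib : ∀ s : Set β, f ⁻¹' s ∩ ↑J = ↑(J.filter (f · ∈ s)) := fun s => by
    ext; simp [and_comm]
  simp only [hfib, Set.ncard_coe_finset, Set.mem_singleton_iff, Finset.mem_coe]
  exact_mod_cast (Finset.sum_card_fiberwise_eq_card_filter J T f).symm

lemma IsFolner.abs_relFreq_fiber_sub_le (hI : IsFolner I) (f : F) (x : O) (c : G) (N : ℕ) :
    |relFreq I (f ⁻¹' {f x + c}) N - relFreq I (f ⁻¹' {c}) N|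
      ≤ (Nat.card ↥(((x + ·) '' I N) ∆ I N) : ℝ) / Nat.card ↥(I N) := by
  have hfin := hI.1 N
  have htrans : (I N ∩ f ⁻¹' {c}).ncard = ((x + ·) '' I N ∩ f ⁻¹' {f x + c}).ncard := by
    rw [← image_add_inter_preimage_singleton,
      Set.ncard_image_of_injective _ (add_right_injective x)]
  have h1 := ncard_inter_le_ncard_inter_add_ncard_symmDiff (f ⁻¹' {f x + c}) hfin
    (hfin.image (x + ·))
  have h2 := ncard_inter_le_ncard_inter_add_ncard_symmDiff (f ⁻¹' {f x + c})
    (hfin.image (x + ·)) hfin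
  rw [symmDiff_comm] at h1
  rw [relFreq, relFreq, ← sub_div, abs_div, abs_of_pos (hI.card_pos N)]
  refine div_le_div_of_nonneg_right (abs_sub_le_iff.2 ⟨?_, ?_⟩) (hI.card_pos N).le
  all_goals
    simp only [Nat.card_coe_set_eq, Set.inter_comm _ (I N), htrans]
    rw [sub_le_iff_le_add']
    exact_mod_cast by omega

lemma IsFolner.tendsto_relFreq_fiber [Finite G] (hI : IsFolner I) {f : F}
    (hf : Function.Surjective f) (c : G) :
    Tendsto (relFreq I (f ⁻¹' {c})) atTop (𝓝 (Nat.card G : ℝ)⁻¹) := by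
  have := Fintype.ofFinite G
  set r := fun d N => relFreq I (f ⁻¹' {d}) N
  set x := fun d => Function.surjInv hf (d - c)
  have hx : ∀ d, f (x d) + c = d := fun d => by
    rw [Function.surjInv_eq hf, sub_add_cancel]
  have hsum : ∀ N, ∑ d, r d N = 1 := fun N => by
    rw [← hI.relFreq_univ N, ← Set.preimage_univ (f := f), ← Finset.coe_univ,
      hI.relFreq_preimage_eq_sum]
  have hdev : ∀ N, ‖(Nat.card G : ℝ) * r c N - 1‖
      ≤ ∑ d, (Nat.card ↥(((x d + ·) '' I N) ∆ I N) : ℝ) / Nat.card ↥(I N) := fun N => by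
    have heq : (Nat.card G : ℝ) * r c N - 1 = ∑ d, (r c N - r d N) := by
      rw [Finset.sum_sub_distrib, hsum N, Finset.sum_const, Finset.card_univ, nsmul_eq_mul,
        Nat.card_eq_fintype_card]
    rw [heq, Real.norm_eq_abs]
    refine (Finset.abs_sum_le_sum_abs _ _).trans (Finset.sum_le_sum fun d _ => ?_)
    rw [abs_sub_comm]
    simpa only [hx] using hI.abs_relFreq_fiber_sub_le f (x d) c N
  have hlim : Tendsto (fun N => (Nat.card G : ℝ) * r c N - 1) atTop (𝓝 0) :=
    squeeze_zero_norm hdev (by simpa using tendsto_finsetSum _ fun d _ => hI.2.2 (x d))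
  have hG : (Nat.card G : ℝ) ≠ 0 := by exact_mod_cast Nat.card_pos.ne'
  simpa [hG] using (hlim.add_const 1).const_mul (Nat.card G : ℝ)⁻¹

lemma IsFolner.hasDensity_preimage [Finite G] (hI : IsFolner I) {f : F}
    (hf : Function.Surjective f) (T : Set G) :
    HasDensity I (f ⁻¹' T) (Nat.card T / Nat.card G) := by
  have hT := T.toFinite
  have hsum := tendsto_finsetSum hT.toFinset fun d _ => hI.tendsto_relFreq_fiber hf d
  rw [Finset.sum_const, nsmul_eq_mul, ← Set.ncard_eq_toFinset_card T hT,
    ← Nat.card_coe_set_eq, ← div_eq_mul_inv] at hsum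
  refine hsum.congr fun N => ?_
  rw [← hI.relFreq_preimage_eq_sum, Set.Finite.coe_toFinset]
  rfl

lemma card_compl_div_card {α : Type*} [Finite α] [Nonempty α] (T : Set α) :
    (Nat.card ↥Tᶜ : ℝ) / Nat.card α = 1 - (Nat.card T : ℝ) / Nat.card α := by
  have hα : (Nat.card α : ℝ) ≠ 0 := by exact_mod_cast Nat.card_pos.ne'
  have hsum : (Nat.card T : ℝ) + Nat.card ↥Tᶜ = Nat.card α := by
    simp only [Nat.card_coe_set_eq]
    exact_mod_cast Set.ncard_add_ncard_compl T
  field_simp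
  linarith

lemma IsFolner.hasDensity_compl_unionLt_preimage (hI : IsFolner I)
    (S : Sieve O) (T : ∀ i, Set (O ⧸ S.b i)) (L : ℕ) :
    HasDensity I (unionLt (fun i => Ideal.Quotient.mk (S.b i) ⁻¹' T i) L)ᶜ
      (∏ i ∈ Finset.range L, (1 - (Nat.card (T i) : ℝ) / S.normb i)) := by
  have := S.finQuot
  let f : O →+* ∀ i : Fin L, O ⧸ S.b i := RingHom.pi fun i => Ideal.Quotient.mk (S.b i)
  have hcop : Pairwise (Function.onFun IsCoprime fun i : Fin L => S.b i) := fun i j hij =>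
    Ideal.isCoprime_iff_sup_eq.2 (S.coprime i j (Fin.val_injective.ne hij))
  have hf : Function.Surjective f := fun y => by
    obtain ⟨r, hr⟩ := Ideal.pi_quotient_surjective hcop y
    exact ⟨r, funext hr⟩
  have hset : (unionLt (fun i => Ideal.Quotient.mk (S.b i) ⁻¹' T i) L)ᶜ
      = f ⁻¹' Set.univ.pi fun i => (T i)ᶜ := by
    ext y
    simp [unionLt, f, Fin.forall_iff]
  rw [hset]
  convert hI.hasDensity_preimage hf _ using 1
  rw [Nat.card_congr (Equiv.Set.univPi _), Nat.card_pi, Nat.card_pi, Nat.cast_prod, Nat.cast_prod,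
    ← Finset.prod_div_distrib, ← Fin.prod_univ_eq_prod_range]
  exact Finset.prod_congr rfl fun i _ => (card_compl_div_card (T i)).symm

end Fibers

section LightTails

lemma compl_unionLt_eq_union {α : Type} (R : ℕ → Set α) (L : ℕ) :
    (unionLt R L)ᶜ = (⋃ i, R i)ᶜ ∪ (unionGe R L \ unionLt R L) := by
  ext y
  simp only [unionLt, unionGe, Set.mem_compl_iff, Set.mem_union, Set.mem_sdiff, Set.mem_iUnion]
  constructor
  · intro hy
    by_cases h : ∃ i, y ∈ R i
    · obtain ⟨i, hi⟩ := h
      exact Or.inr ⟨⟨i, not_lt.1 fun hiL => hy ⟨i, hiL, hi⟩, hi⟩, hy⟩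
    · exact Or.inl h
  · rintro (h | ⟨-, h⟩)
    · exact fun ⟨i, _, hi⟩ => h ⟨i, hi⟩
    · exact h

variable {I : ℕ → Set O}

lemma IsFolner.relFreq_compl_unionLt (hI : IsFolner I) (R : ℕ → Set O) (L N : ℕ) :
    relFreq I (unionLt R L)ᶜ N
      = relFreq I (⋃ i, R i)ᶜ N + relFreq I (unionGe R L \ unionLt R L) N := by
  rw [compl_unionLt_eq_union]
  exact hI.relFreq_union (Set.disjoint_compl_left_iff_subset.2 <|
    Set.sdiff_subset.trans <| Set.iUnion₂_subset fun i _ => Set.subset_iUnion R i) N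

variable {R : ℕ → Set O}

lemma IsFolner.upperDensity_compl_iUnion_le (hI : IsFolner I) {P : ℕ → ℝ}
    (hP : ∀ L, HasDensity I (unionLt R L)ᶜ (P L)) (L : ℕ) :
    upperDensity I (⋃ i, R i)ᶜ ≤ P L := by
  refine (hI.upperDensity_mono (Set.compl_subset_compl.2 ?_)).trans_eq (hP L).limsup_eq
  exact Set.iUnion₂_subset fun i _ => Set.subset_iUnion R i

lemma IsFolner.hasDensity_compl_iUnion_iff (hI : IsFolner I) {P : ℕ → ℝ} {p : ℝ}
    (hP : ∀ L, HasDensity I (unionLt R L)ᶜ (P L)) (hp : Tendsto P atTop (𝓝 p)) :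
    HasDensity I (⋃ i, R i)ᶜ p ↔ WeakLightTailsFam I R := by
  constructor
  · intro hD
    have htail : ∀ L, HasDensity I (unionGe R L \ unionLt R L) (P L - p) := fun L =>
      ((hP L).sub hD).congr fun N => by
        change relFreq I _ N - relFreq I _ N = relFreq I _ N
        rw [hI.relFreq_compl_unionLt R L N, add_sub_cancel_left]
    have hud : (fun L => upperDensity I (unionGe R L \ unionLt R L)) = fun L => P L - p :=
      funext fun L => (htail L).limsup_eq
    rw [WeakLightTailsFam, hud]
    simpa using hp.sub_const p
  · intro hW
    refine tendsto_of_le_liminf_of_limsup_le ?_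
      (ge_of_tendsto hp (Eventually.of_forall (hI.upperDensity_compl_iUnion_le hP)))
      (hI.isBoundedUnder_le_relFreq _) (isBoundedUnder_ge_relFreq I _)
    refine le_of_forall_pos_le_add fun ε hε => ?_
    obtain ⟨L, hWL, hPL⟩ := ((hW.eventually (gt_mem_nhds (by linarith : (0 : ℝ) < ε / 3))).and
      (hp.eventually (lt_mem_nhds (by linarith : p - ε / 3 < p)))).exists
    have htail : ∀ᶠ N in atTop, relFreq I (unionGe R L \ unionLt R L) N < ε / 3 :=
      eventually_lt_of_limsup_lt hWL (hI.isBoundedUnder_le_relFreq _)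
    have hpartial : ∀ᶠ N in atTop, P L - ε / 3 < relFreq I (unionLt R L)ᶜ N :=
      (hP L).eventually (lt_mem_nhds (by linarith))
    have hfreq : ∀ᶠ N in atTop, p - ε ≤ relFreq I (⋃ i, R i)ᶜ N := by
      filter_upwards [htail, hpartial] with N hN hN'
      linarith [hI.relFreq_compl_unionLt R L N]
    exact sub_le_iff_le_add.1 <|
      le_liminf_of_le (hI.isBoundedUnder_le_relFreq _).isCoboundedUnder_ge hfreq

end LightTails

lemma mem_neg_add_iff {G : Type*} [AddCommGroup G] {A B : Set G} {x : G} :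
    x ∈ -A + B ↔ ∃ a ∈ A, x + a ∈ B := by
  constructor
  · rintro ⟨u, hu, v, hv, rfl⟩
    exact ⟨-u, hu, by simpa using hv⟩
  · rintro ⟨a, ha, hxa⟩
    exact ⟨-a, by rwa [Set.mem_neg, neg_neg], x + a, hxa, by simp⟩

lemma Sieve.setOf_forall_add_mem_FR (S : Sieve O) (A : Set O) :
    {x | ∀ a ∈ A, x + a ∈ S.FR} = (⋃ i, -A + S.RSet i)ᶜ := by
  ext x
  simp only [Sieve.FR, Set.mem_ofPred_eq, Set.mem_compl_iff, Set.mem_iUnion, mem_neg_add_iff]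
  grind

lemma preimage_image_mk_of_add_subset {J : Ideal O} {X : Set O} (h : X + (J : Set O) ⊆ X) :
    Ideal.Quotient.mk J ⁻¹' (Ideal.Quotient.mk J '' X) = X := by
  refine (Set.subset_preimage_image _ _).antisymm' ?_
  rintro y ⟨r, hr, hry⟩
  exact h ⟨r, hr, y - r, Ideal.Quotient.eq.1 hry.symm, add_sub_cancel r y⟩

lemma Sieve.preimage_image_mk_neg_add_RSet (S : Sieve O) (A : Set O) (i : ℕ) :
    Ideal.Quotient.mk (S.b i) ⁻¹' (Ideal.Quotient.mk (S.b i) '' (-A + S.RSet i))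
      = -A + S.RSet i :=
  preimage_image_mk_of_add_subset (by rw [Sieve.RSet, add_assoc, add_assoc, coe_add_coe])

lemma Sieve.cardShift_lt_normb {S : Sieve O} {A : Set O} (hA : S.Admissible A) (i : ℕ) :
    S.cardShift A i < S.normb i := by
  have := S.finQuot i
  rw [Sieve.cardShift, Sieve.normb, Nat.card_coe_set_eq]
  refine Set.ncard_lt_card fun h => hA i ?_
  rw [← S.preimage_image_mk_neg_add_RSet A i, h, Set.preimage_univ]

theorem pattern_density_iff_shifted_weakLightTails_general
    {m : ℕ} (K : Fin m → Type) [∀ j, Field (K j)]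
    [∀ j, NumberField (K j)]
    (S : Sieve (OK K)) (A : Set (OK K)) (hAdm : S.Admissible A)
    (I : ℕ → Set (OK K)) (hI : IsFolner I) :
    upperDensity I {x : OK K | ∀ a ∈ A, x + a ∈ S.FR} ≤ S.prodDensityShift A
    ∧ ((HasDensity I {x : OK K | ∀ a ∈ A, x + a ∈ S.FR} (S.prodDensityShift A)
          ∧ 0 < S.prodDensityShift A)
        ↔ ((Summable fun i => (S.cardShift A i : ℝ) / (S.normb i : ℝ))
            ∧ WeakLightTailsFam I (fun i => -A + S.RSet i))) := by
  set x : ℕ → ℝ := fun i => (S.cardShift A i : ℝ) / S.normb i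
  have h0 : ∀ i, 0 ≤ x i := fun i => by positivity
  have h1 : ∀ i, x i < 1 := fun i => by
    have := S.finQuot i
    exact (div_lt_one (by exact_mod_cast Nat.card_pos)).2
      (by exact_mod_cast S.cardShift_lt_normb hAdm i)
  have hP : ∀ L, HasDensity I (unionLt (fun i => -A + S.RSet i) L)ᶜ
      (∏ i ∈ Finset.range L, (1 - x i)) := fun L => by
    have := hI.hasDensity_compl_unionLt_preimage S
      (fun i => Ideal.Quotient.mk (S.b i) '' (-A + S.RSet i)) L
    simp only [S.preimage_image_mk_neg_add_RSet] at this
    exact this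
  rw [S.setOf_forall_add_mem_FR]
  have hlim := tendsto_prod_range_one_sub h0 fun i => (h1 i).le
  have hiff := hI.hasDensity_compl_iUnion_iff hP hlim
  have hpos := iInf_prod_range_one_sub_pos_iff h0 h1
  refine ⟨le_ciInf (hI.upperDensity_compl_iUnion_le hP), ?_⟩
  exact (hiff.and hpos).trans and_comm

/-- **Pattern densities and the shifted sieve.** For any sieve `R`, any `R`-admissible set
`A` and any Følner sequence `I`: the upper density of `{x : x + A ⊆ F_R}` is at most
`∏ (1 - |-A + R_i|/N(b_i))`; and its density exists, equals this product, and the product is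
positive, if and only if the shifted sieve `R'_i = -A + R_i` is Erdős with weak light tails
for `I`. -/
theorem pattern_density_iff_shifted_weakLightTails
    {m : ℕ} (hm : 0 < m) (K : Fin m → Type) [∀ j, Field (K j)]
    [∀ j, NumberField (K j)]
    (S : Sieve (OK K)) (A : Set (OK K)) (hAdm : S.Admissible A)
    (I : ℕ → Set (OK K)) (hI : IsFolner I) :
    upperDensity I {x : OK K | ∀ a ∈ A, x + a ∈ S.FR} ≤ S.prodDensityShift A
    ∧ ((HasDensity I {x : OK K | ∀ a ∈ A, x + a ∈ S.FR} (S.prodDensityShift A)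
          ∧ 0 < S.prodDensityShift A)
        ↔ ((Summable fun i => (S.cardShift A i : ℝ) / (S.normb i : ℝ))
            ∧ WeakLightTailsFam I (fun i => -A + S.RSet i))) :=
  pattern_density_iff_shifted_weakLightTails_general K S A hAdm I hI

end ErdosSieve
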